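/- For the root system Cₙ, the generalized cosines of the fundamental weights satisfy the Vieta identity: for all u ∈ R^n, Σ_{i=1}^n binom(n,i) Θ_{ϖᵢ}(u) = ∏_{k=1}^n (1 + cos(2π u_k)) − 1 ≥ −1, with equality attained at u = ϖⱼ/2. Consequently, with c_i = binom(n,i)/(2^n − 1), the polynomial Σᵢ cᵢ zᵢ has minimum −1/(2^n − 1) on the Chebyshev image T, and the spectral bound yields χ_m(R^n, ∂Vor(Z^n)) ≥ 2^n, which is sharp. -/

import Mathlib

noncomputable section
open scoped BigOperators

abbrev EV (n : ℕ) := EuclideanSpace ℝ (Fin n)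

/-- The hyperoctahedral group `Sₙ ⋉ {±1}ⁿ` (the Weyl group of `Bₙ`/`Cₙ`) acting on `ℝⁿ`
by permutations and sign changes of coordinates. -/
def sgnAct {n : ℕ} (g : Equiv.Perm (Fin n) × (Fin n → Bool)) (μ : EV n) : EV n :=
  WithLp.toLp 2 (fun j => (if g.2 j then (1 : ℝ) else -1) * μ (g.1 j))

/-- The generalized cosine for the Weyl group of `Bₙ`/`Cₙ`. -/
def cGencos {n : ℕ} (μ u : EV n) : ℂ :=
  ((Fintype.card (Equiv.Perm (Fin n) × (Fin n → Bool)) : ℂ))⁻¹ *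
    ∑ g : Equiv.Perm (Fin n) × (Fin n → Bool),
      Complex.exp (-(2 * Real.pi * Complex.I) * ((inner ℝ (sgnAct g μ) u : ℝ) : ℂ))

/-- The fundamental weight `ϖ₁ = e₁` of `Cₙ`. -/
def cϖ₁ {n : ℕ} : EV n := WithLp.toLp 2 (fun j => if (j : ℕ) = 0 then 1 else 0)

/-- The fundamental weight `ϖ₂ = e₁ + e₂` of `Cₙ`/`Bₙ`. -/
def cϖ₂ {n : ℕ} : EV n := WithLp.toLp 2 (fun j => if (j : ℕ) < 2 then 1 else 0)

/-- The fundamental weight `ϖ_{i+1} = e₁ + … + e_{i+1}` of `Cₙ`, for `i : Fin n`. -/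
def cϖ {n : ℕ} (i : Fin n) : EV n := WithLp.toLp 2 (fun j => if (j : ℕ) ≤ (i : ℕ) then 1 else 0)

/-- The boundary of the cube `Vor(ℤⁿ) = [−1/2,1/2]ⁿ`. -/
def cubeBoundary (n : ℕ) : Set (EV n) :=
  { u | (∀ i, |u i| ≤ 1 / 2) ∧ ∃ i, |u i| = 1 / 2 }

/-!
Summing over the sign changes factorises the generalized cosine:
`Θ_μ(u) = (1/n!) ∑_σ ∏_j cos(2π μ_{σ j} u_j)`, so `Θ_{ϖᵢ}(u)` averages over `σ` the product of
`cos 2πu_j` over the `i`-set `σ⁻¹{1,…,i}`. Since permutations act transitively on `i`-sets,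
this average is `eᵢ(cos 2πu) / C(n,i)`, and Vieta's formula `∑ᵢ eᵢ(x) = ∏ₖ (1 + xₖ) − 1` gives the
identity. The product is nonnegative and vanishes as soon as one coordinate equals `1/2`.

For the colouring bound, any two distinct points of `{0, 1/2}ⁿ` differ by a vector on the boundary
of the cube, so they need distinct colours; conversely, colouring `v` by the parities of the
`⌊2 v_j⌋` uses `2ⁿ` measurable classes and is proper.
-/

open Finset

section PermutationAverage

variable {α M : Type*} [Fintype α] [AddCommMonoid M]

theorem sum_powersetCard_map_perm (σ : Equiv.Perm α) (k : ℕ) (f : Finset α → M) :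
    ∑ B ∈ powersetCard k univ, f (B.map σ.toEmbedding) = ∑ S ∈ powersetCard k univ, f S := by
  conv_rhs => rw [← map_univ_equiv σ, powersetCard_map, sum_map]
  rfl

variable [DecidableEq α]

theorem sum_perm_map_symm_eq_of_card_eq (f : Finset α → M) {A B : Finset α} (h : #A = #B) :
    ∑ σ : Equiv.Perm α, f (A.map σ.symm.toEmbedding) =
      ∑ σ : Equiv.Perm α, f (B.map σ.symm.toEmbedding) := by
  let π : Equiv.Perm α := (equivOfCardEq h).extendSubtype
  have hπ : A.map π.toEmbedding = B := by
    refine eq_of_subset_of_card_le (fun b hb => ?_) (by rw [card_map, h])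
    obtain ⟨a, ha, rfl⟩ := mem_map.1 hb
    exact (equivOfCardEq h).extendSubtype_mem a ha
  refine Fintype.sum_equiv (Equiv.mulLeft π) _ _ fun σ => ?_
  rw [← hπ, map_map]
  congr 2
  ext x
  simp [Equiv.Perm.mul_def]

theorem choose_card_nsmul_sum_perm_map_symm (f : Finset α → M) (A : Finset α) :
    (Fintype.card α).choose #A • ∑ σ : Equiv.Perm α, f (A.map σ.symm.toEmbedding) =
      (Fintype.card α).factorial • ∑ S ∈ powersetCard #A univ, f S := by
  calc (Fintype.card α).choose #A • ∑ σ : Equiv.Perm α, f (A.map σ.symm.toEmbedding)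
      = ∑ B ∈ powersetCard #A univ, ∑ σ : Equiv.Perm α, f (A.map σ.symm.toEmbedding) := by
        rw [sum_const, card_powersetCard, card_univ]
    _ = ∑ B ∈ powersetCard #A univ, ∑ σ : Equiv.Perm α, f (B.map σ.symm.toEmbedding) :=
        sum_congr rfl fun B hB => sum_perm_map_symm_eq_of_card_eq f (mem_powersetCard.1 hB).2.symm
    _ = ∑ σ : Equiv.Perm α, ∑ S ∈ powersetCard #A univ, f S := by
        rw [sum_comm]
        exact sum_congr rfl fun σ _ => sum_powersetCard_map_perm σ.symm _ f
    _ = (Fintype.card α).factorial • ∑ S ∈ powersetCard #A univ, f S := by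
        rw [sum_const, card_univ, Fintype.card_perm]

end PermutationAverage

theorem sum_fin_powersetCard_succ_prod {R : Type*} [CommRing R] {n : ℕ} (c : Fin n → R) :
    ∑ i : Fin n, ∑ S ∈ powersetCard (i + 1) univ, ∏ j ∈ S, c j = ∏ k, (1 + c k) - 1 := by
  rw [prod_one_add, sum_powerset, card_univ, Fintype.card_fin, sum_range_succ',
    powersetCard_zero, sum_singleton, prod_empty, add_sub_cancel_right,
    Fin.sum_univ_eq_sum_range (fun i => ∑ S ∈ powersetCard (i + 1) univ, ∏ j ∈ S, c j)]

theorem prod_one_add_cos_nonneg {ι : Type*} [Fintype ι] (x : ι → ℝ) :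
    0 ≤ ∏ k, (1 + Real.cos (x k)) :=
  prod_nonneg fun k _ => by linarith [Real.neg_one_le_cos (x k)]

theorem sum_bool_exp_sign_mul (a : ℝ) :
    ∑ b : Bool,
        Complex.exp (-(2 * Real.pi * Complex.I) * (((if b then (1 : ℝ) else -1) * a : ℝ) : ℂ)) =
      2 * Complex.cos (2 * Real.pi * a) := by
  rw [Fintype.sum_bool, Complex.two_cos]
  simp only [if_true, Bool.false_eq_true, if_false]
  push_cast
  ring_nf

section GeneralizedCosine

variable {n : ℕ}

theorem cGencos_eq_sum_perm (μ u : EV n) :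
    cGencos μ u = (n.factorial : ℂ)⁻¹ *
      ∑ σ : Equiv.Perm (Fin n), ∏ j, Complex.cos (2 * Real.pi * (μ (σ j) * u j)) := by
  have hsigns : ∀ σ : Equiv.Perm (Fin n),
      ∑ ε : Fin n → Bool, Complex.exp (-(2 * Real.pi * Complex.I) *
        ((inner ℝ (sgnAct (σ, ε) μ) u : ℝ) : ℂ))
      = 2 ^ n * ∏ j, Complex.cos (2 * Real.pi * (μ (σ j) * u j)) := by
    intro σ
    have hexp : ∀ ε : Fin n → Bool, Complex.exp (-(2 * Real.pi * Complex.I) *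
        ((inner ℝ (sgnAct (σ, ε) μ) u : ℝ) : ℂ)) = ∏ j, Complex.exp (-(2 * Real.pi * Complex.I) *
          (((if ε j then (1 : ℝ) else -1) * (μ (σ j) * u j) : ℝ) : ℂ)) := by
      intro ε
      simp only [PiLp.inner_apply, sgnAct, RCLike.inner_apply, conj_trivial, Complex.ofReal_sum,
        mul_sum, ← Complex.exp_sum]
      congr 2 with j
      push_cast
      ring
    rw [Fintype.sum_congr _ _ hexp, ← Fintype.prod_sum fun j (b : Bool) =>
      Complex.exp (-(2 * Real.pi * Complex.I) *
        (((if b then (1 : ℝ) else -1) * (μ (σ j) * u j) : ℝ) : ℂ))]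
    simp only [sum_bool_exp_sign_mul, prod_mul_distrib, prod_const, card_univ, Fintype.card_fin]
    push_cast
    rfl
  rw [cGencos, Fintype.sum_prod_type, sum_congr rfl fun σ _ => hsigns σ, ← mul_sum,
    Fintype.card_prod, Fintype.card_perm, Fintype.card_fun, Fintype.card_bool, Fintype.card_fin]
  push_cast
  have : (2 : ℂ) ^ n ≠ 0 := pow_ne_zero _ two_ne_zero
  field_simp

theorem prod_cos_cϖ_mul (i : Fin n) (σ : Equiv.Perm (Fin n)) (u : EV n) :
    ∏ j, Complex.cos (2 * Real.pi * (cϖ i (σ j) * u j)) =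
      ∏ j ∈ (Iic i).map σ.symm.toEmbedding, Complex.cos (2 * Real.pi * u j) := by
  rw [prod_map, ← Equiv.prod_comp σ.symm, ← filter_ge_eq_Iic, prod_filter]
  refine Fintype.prod_congr _ _ fun k => ?_
  simp only [Equiv.apply_symm_apply, Equiv.coe_toEmbedding, cϖ, ← Fin.le_def]
  split_ifs <;> simp

theorem choose_mul_cGencos_cϖ (i : Fin n) (u : EV n) :
    (n.choose (i + 1) : ℂ) * cGencos (cϖ i) u =
      ∑ S ∈ powersetCard (i + 1) univ, ∏ j ∈ S, Complex.cos (2 * Real.pi * u j) := by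
  have h := choose_card_nsmul_sum_perm_map_symm
    (fun S => ∏ j ∈ S, Complex.cos (2 * Real.pi * u j)) (Iic i)
  simp only [Fin.card_Iic, Fintype.card_fin, nsmul_eq_mul] at h
  have hfact : (n.factorial : ℂ) ≠ 0 := by exact_mod_cast n.factorial_ne_zero
  rw [cGencos_eq_sum_perm, mul_left_comm]
  simp only [prod_cos_cϖ_mul]
  rw [h, inv_mul_cancel_left₀ hfact]

theorem sum_choose_mul_cGencos_cϖ (u : EV n) :
    ∑ i : Fin n, (n.choose (i + 1) : ℂ) * cGencos (cϖ i) u =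
      ((∏ k, (1 + Real.cos (2 * Real.pi * u k)) : ℝ) : ℂ) - 1 := by
  simp only [choose_mul_cGencos_cϖ, sum_fin_powersetCard_succ_prod]
  push_cast
  rfl

theorem neg_one_le_re_sum_choose_mul_cGencos_cϖ (u : EV n) :
    -1 ≤ (∑ i : Fin n, (n.choose (i + 1) : ℂ) * cGencos (cϖ i) u).re := by
  rw [sum_choose_mul_cGencos_cϖ, Complex.sub_re, Complex.ofReal_re, Complex.one_re]
  linarith [prod_one_add_cos_nonneg fun k => 2 * Real.pi * u k]

theorem prod_one_add_cos_half_smul_cϖ (j : Fin n) :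
    ∏ k, (1 + Real.cos (2 * Real.pi * ((1 / 2 : ℝ) • cϖ j) k)) = 0 := by
  have h0 : (⟨0, j.pos⟩ : Fin n) ≤ j := Nat.zero_le _
  have hhalf : ((1 / 2 : ℝ) • cϖ j) ⟨0, j.pos⟩ = 1 / 2 := by simp [cϖ, h0]
  refine prod_eq_zero (mem_univ ⟨0, j.pos⟩) ?_
  rw [hhalf, show 2 * Real.pi * (1 / 2) = Real.pi by ring, Real.cos_pi]
  norm_num

theorem sum_choose_mul_cGencos_cϖ_half_smul_cϖ (j : Fin n) :
    ∑ i : Fin n, (n.choose (i + 1) : ℂ) * cGencos (cϖ i) ((1 / 2 : ℝ) • cϖ j) = -1 := by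
  rw [sum_choose_mul_cGencos_cϖ, prod_one_add_cos_half_smul_cϖ]
  norm_num

theorem isLeast_sum_choose_div_mul_cGencos_cϖ (hn : 1 ≤ n) :
    IsLeast {x : ℝ | ∃ u : EV n,
      ∑ i : Fin n, ((n.choose (i + 1) : ℂ) / ((2 ^ n - 1 : ℕ) : ℂ)) * cGencos (cϖ i) u = x}
      (-(1 / ((2 : ℝ) ^ n - 1))) := by
  have hr : (0 : ℝ) < 2 ^ n - 1 := by
    have : (2 : ℝ) ≤ 2 ^ n := by simpa using pow_le_pow_right₀ one_le_two hn
    linarith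
  have hsum : ∀ u : EV n,
      ∑ i : Fin n, ((n.choose (i + 1) : ℂ) / ((2 ^ n - 1 : ℕ) : ℂ)) * cGencos (cϖ i) u =
        (((∏ k, (1 + Real.cos (2 * Real.pi * u k)) - 1) / (2 ^ n - 1) : ℝ) : ℂ) := by
    intro u
    simp only [div_mul_eq_mul_div, ← sum_div, sum_choose_mul_cGencos_cϖ]
    push_cast [Nat.one_le_two_pow]
    rfl
  constructor
  · refine ⟨(1 / 2 : ℝ) • cϖ ⟨0, hn⟩, ?_⟩
    rw [hsum, prod_one_add_cos_half_smul_cϖ]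
    push_cast
    ring
  · rintro x ⟨u, hu⟩
    rw [hsum, Complex.ofReal_inj] at hu
    rw [← hu, neg_div', div_le_div_iff_of_pos_right hr]
    linarith [prod_one_add_cos_nonneg fun k => 2 * Real.pi * u k]

end GeneralizedCosine

section Colouring

variable {n : ℕ}

def halfCorner (s : Fin n → Bool) : EV n := WithLp.toLp 2 fun i => if s i then 1 / 2 else 0

theorem halfCorner_sub_mem_cubeBoundary {s t : Fin n → Bool} (h : s ≠ t) :
    halfCorner s - halfCorner t ∈ cubeBoundary n := by
  obtain ⟨j, hj⟩ := Function.ne_iff.1 h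
  refine ⟨fun i => ?_, j, ?_⟩ <;> simp only [halfCorner, PiLp.sub_apply]
  · cases s i <;> cases t i <;> norm_num [abs_of_nonneg]
  · cases hs : s j <;> cases ht : t j <;> simp_all

theorem two_pow_le_of_forall_sub_notMem_cubeBoundary {k : ℕ} (C : Fin k → Set (EV n))
    (hcover : ∀ v, ∃ i, v ∈ C i) (hC : ∀ i, ∀ u ∈ C i, ∀ w ∈ C i, u - w ∉ cubeBoundary n) :
    2 ^ n ≤ k := by
  choose color hcolor using fun s : Fin n → Bool => hcover (halfCorner s)
  have hinj : Function.Injective color := by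
    intro s t hst
    by_contra hne
    exact hC _ _ (hcolor s) _ (hst ▸ hcolor t) (halfCorner_sub_mem_cubeBoundary hne)
  simpa using Fintype.card_le_of_injective color hinj

def parityClass (v : EV n) : Fin n → Bool := fun j => decide (Even ⌊2 * v j⌋)

theorem measurable_parityClass : Measurable (parityClass (n := n)) :=
  measurable_pi_lambda _ fun j => (measurable_from_top (f := fun m : ℤ => decide (Even m))).comp <|
    Int.measurable_floor.comp <|
    (EuclideanSpace.proj (𝕜 := ℝ) j).continuous.measurable.const_mul 2

theorem parityClass_ne_of_sub_mem_cubeBoundary {u w : EV n} (h : u - w ∈ cubeBoundary n) :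
    parityClass u ≠ parityClass w := by
  obtain ⟨j, hj⟩ := h.2
  have hflip : ∀ a b : ℝ, a - b = 1 / 2 → decide (Even ⌊2 * a⌋) ≠ decide (Even ⌊2 * b⌋) := by
    intro a b hab
    simp [show 2 * a = 2 * b + 1 by linarith, ← Int.not_even_iff_odd]
  intro hpar
  have hj' := congr_fun hpar j
  rw [PiLp.sub_apply] at hj
  rcases abs_eq (by norm_num : (0 : ℝ) ≤ 1 / 2) |>.1 hj with hj | hj
  · exact hflip _ _ hj hj'
  · exact hflip _ _ (by linarith) hj'.symm

theorem exists_measurable_partition_forall_sub_notMem_cubeBoundary :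
    ∃ C : Fin (2 ^ n) → Set (EV n), (∀ i, MeasurableSet (C i)) ∧
      (∀ i j, i ≠ j → C i ∩ C j = ∅) ∧ (∀ v : EV n, ∃ i, v ∈ C i) ∧
      (∀ i, ∀ u ∈ C i, ∀ w ∈ C i, u - w ∉ cubeBoundary n) := by
  let e : (Fin n → Bool) ≃ Fin (2 ^ n) := Fintype.equivFinOfCardEq (by simp)
  refine ⟨fun i => parityClass ⁻¹' {e.symm i}, fun i => measurable_parityClass
    (measurableSet_singleton _), fun i j hij => ?_, fun v => ⟨e (parityClass v), by simp⟩,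
    fun i u hu w hw hmem => parityClass_ne_of_sub_mem_cubeBoundary hmem (hu.trans hw.symm)⟩
  ext v
  simp only [Set.mem_inter_iff, Set.mem_preimage, Set.mem_singleton_iff, Set.mem_empty_iff_false,
    iff_false, not_and]
  exact fun hi hj => hij (e.symm.injective (hi.symm.trans hj))

end Colouring

/-- For `Cₙ`, the Vieta identity
`Σᵢ C(n,i) Θ_{ϖᵢ}(u) = Πₖ (1 + cos(2π uₖ)) − 1 ≥ −1` holds, with equality at `u = ϖⱼ/2`.
Consequently, with `cᵢ = C(n,i)/(2ⁿ−1)`, the minimum of `Σᵢ cᵢ zᵢ` on the Chebyshev image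
is `−1/(2ⁿ−1)`, and the spectral bound yields `χ_m(ℝⁿ, ∂Vor(ℤⁿ)) ≥ 2ⁿ`, which is sharp. -/
theorem statement18 {n : ℕ} (hn : 1 ≤ n) :
    -- the Vieta identity:
    (∀ u : EV n, ∑ i : Fin n, ((n.choose ((i : ℕ) + 1)) : ℂ) * cGencos (cϖ i) u
        = ((∏ k, (1 + Real.cos (2 * Real.pi * u k)) : ℝ) : ℂ) - 1) ∧
    -- the lower bound `−1`:
    (∀ u : EV n,
      -1 ≤ (∑ i : Fin n, ((n.choose ((i : ℕ) + 1)) : ℂ) * cGencos (cϖ i) u).re) ∧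
    -- equality is attained at `u = ϖⱼ/2`:
    (∀ j : Fin n, (∑ i : Fin n, ((n.choose ((i : ℕ) + 1)) : ℂ)
        * cGencos (cϖ i) ((1 / 2 : ℝ) • cϖ j)) = -1) ∧
    -- with `cᵢ = C(n,i)/(2ⁿ−1)`, the minimum on the Chebyshev image is `−1/(2ⁿ−1)`:
    IsLeast { x : ℝ | ∃ u : EV n,
      ∑ i : Fin n, (((n.choose ((i : ℕ) + 1)) : ℂ) / ((2 ^ n - 1 : ℕ) : ℂ))
          * cGencos (cϖ i) u = (x : ℂ) } (-(1 / ((2 : ℝ) ^ n - 1))) ∧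
    -- the spectral bound `χ_m(ℝⁿ, ∂Vor(ℤⁿ)) ≥ 2ⁿ`:
    (∀ (k : ℕ) (C : Fin k → Set (EV n)), (∀ i, MeasurableSet (C i)) →
      (∀ i j, i ≠ j → C i ∩ C j = ∅) → (∀ v : EV n, ∃ i, v ∈ C i) →
      (∀ i, ∀ u ∈ C i, ∀ w ∈ C i, u - w ∉ cubeBoundary n) → 2 ^ n ≤ k) ∧
    -- and it is sharp:
    (∃ C : Fin (2 ^ n) → Set (EV n), (∀ i, MeasurableSet (C i)) ∧
      (∀ i j, i ≠ j → C i ∩ C j = ∅) ∧ (∀ v : EV n, ∃ i, v ∈ C i) ∧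
      (∀ i, ∀ u ∈ C i, ∀ w ∈ C i, u - w ∉ cubeBoundary n)) := by
  exact ⟨sum_choose_mul_cGencos_cϖ, neg_one_le_re_sum_choose_mul_cGencos_cϖ,
    sum_choose_mul_cGencos_cϖ_half_smul_cϖ, isLeast_sum_choose_div_mul_cGencos_cϖ hn,
    fun _ C _ _ hcover hC => two_pow_le_of_forall_sub_notMem_cubeBoundary C hcover hC,
    exists_measurable_partition_forall_sub_notMem_cubeBoundary⟩
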